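/- For a countable message space M, there exists an encoder Φ on finite subsets of M, of the form Φ(S) = ∑_{m ∈ S} f(m) with f : M → ℝ, that is simultaneously permutation invariant (depends only on the set) and injective (distinct finite subsets map to distinct reals). -/
import Mathlib

/-- Main theorem: for a countable message space `M` there exists a sum-pooling
encoder `Φ(S) = ∑_{m ∈ S} f m` on finite subsets that is simultaneously
permutation invariant (it takes equal values on lists that are permutations of
each other, depending only on the underlying set) and injective. -/
theorem exists_perm_invariant_injective_encoder (M : Type*) [Countable M] :
    ∃ f : M → ℝ,
      (∀ l₁ l₂ : List M, l₁.Perm l₂ → (l₁.map f).sum = (l₂.map f).sum) ∧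
      Function.Injective (fun S : Finset M => ∑ m ∈ S, f m) := by
  obtain ⟨e, he⟩ := Countable.exists_injective_nat M
  refine ⟨fun m => ((2 ^ e m : ℕ) : ℝ), ?_, ?_⟩
  · intro l₁ l₂ hp
    exact (hp.map _).sum_eq
  · intro S T h
    simp only at h
    have hnat : ((∑ m ∈ S, 2 ^ e m : ℕ) : ℝ) = ((∑ m ∈ T, 2 ^ e m : ℕ) : ℝ) := by
      exact_mod_cast h
    have hnat' : (∑ m ∈ S, 2 ^ e m : ℕ) = ∑ m ∈ T, 2 ^ e m := Nat.cast_injective hnat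
    have hS : ∑ m ∈ S, 2 ^ e m = ∑ i ∈ S.image e, 2 ^ i :=
      (Finset.sum_image (fun x _ y _ hxy => he hxy)).symm
    have hT : ∑ m ∈ T, 2 ^ e m = ∑ i ∈ T.image e, 2 ^ i :=
      (Finset.sum_image (fun x _ y _ hxy => he hxy)).symm
    have himg : S.image e = T.image e := by
      apply Finset.geomSum_injective (le_refl 2)
      simpa [hS, hT] using hnat'
    ext m
    constructor <;> intro hm
    · have : e m ∈ T.image e := himg ▸ Finset.mem_image_of_mem e hm
      obtain ⟨m', hm', hem⟩ := Finset.mem_image.mp this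
      exact he hem ▸ hm'
    · have : e m ∈ S.image e := himg ▸ Finset.mem_image_of_mem e hm
      obtain ⟨m', hm', hem⟩ := Finset.mem_image.mp this
      exact he hem ▸ hm'
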